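/- Under the extended global error bound property eGEB(κ, ω) for φ = f + g, the proximal gradient method with step γ ≥ L contracts function values: for all iterates with φ(x_i) − φ* ≤ ω, one has φ(x_{i+1}) − φ* ≤ (1 − κ/(2γ))(φ(x_i) − φ*). -/

import Mathlib

/-! The step `q = p a` minimises the `γ`-strongly convex model
`f a + ⟪∇f a, u - a⟫ + γ/2 ‖u - a‖² + g u`. Strong convexity, the descent lemma (`L ≤ γ`) and the
gradient inequality for `f` give the three-point inequality
`φ q + γ/2 ‖u - q‖² ≤ φ u + γ/2 ‖u - a‖²` on `dom g`. Testing it at `u = (1 - t) a + t x̄` with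
`x̄ ∈ 𝒳` and taking the infimum over `x̄` yields, with `r = ‖a - q‖` and `d = d(a, 𝒳)`,
`φ q - φ* ≤ (1 - t)(φ a - φ*) + γ t d r - γ r²/2`; for `t = κ/(2γ)` the error bound `κ d ≤ γ r`
makes the last two terms nonpositive. -/

open RealInnerProductSpace Metric Set Filter

abbrev Euc (n : ℕ) : Type := EuclideanSpace ℝ (Fin n)

theorem le_one_sub_mul_of_forall_le {Δ Δ' d r κ γ : ℝ} (hγ : 0 < γ) (hκ : 0 < κ) (hr : 0 ≤ r)
    (hΔ' : 0 ≤ Δ') (heb : κ * d ≤ γ * r) (hr0 : r = 0 → Δ' = Δ)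
    (h : ∀ t, 0 ≤ t → t ≤ 1 → Δ' ≤ (1 - t) * Δ + γ * t * d * r - γ / 2 * r ^ 2) :
    Δ' ≤ (1 - κ / (2 * γ)) * Δ := by
  rcases le_or_gt κ (2 * γ) with hκγ | hκγ
  · have ht : γ * (κ / (2 * γ)) = κ / 2 := by field_simp
    have := h (κ / (2 * γ)) (by positivity) ((div_le_one (by positivity)).2 hκγ)
    rw [ht] at this
    nlinarith [mul_le_mul_of_nonneg_right heb hr]
  · -- for `t = 1`, `κ d ≤ γ r < κ r / 2` makes the bound negative unless `r = 0`
    have h1 := h 1 zero_le_one le_rfl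
    obtain rfl : r = 0 := by
      by_contra hne
      have hr' : 0 < r := lt_of_le_of_ne hr (Ne.symm hne)
      rcases le_or_gt d 0 with hd | hd
      · nlinarith [mul_nonpos_of_nonpos_of_nonneg (mul_nonpos_of_nonpos_of_nonneg hd hr) hγ.le,
          mul_pos hγ (mul_pos hr' hr')]
      · nlinarith [mul_le_mul_of_nonneg_right heb hr, mul_pos hd hr']
    obtain rfl := hr0 rfl
    have : Δ' = 0 := by linarith
    simp [this]

theorem le_mul_infDist_add {α : Type*} [PseudoMetricSpace α] {s : Set α} {x : α} {c k b : ℝ}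
    (hs : s.Nonempty) (hk : 0 ≤ k) (h : ∀ y ∈ s, c ≤ k * dist x y + b) :
    c ≤ k * infDist x s + b := by
  rcases hk.eq_or_lt with rfl | hk
  · obtain ⟨y, hy⟩ := hs
    simpa using h y hy
  · have : (c - b) / k ≤ infDist x s :=
      (le_infDist hs).2 fun y hy => by rw [div_le_iff₀ hk]; linarith [h y hy]
    rw [div_le_iff₀ hk] at this
    linarith

section Smooth

variable {E : Type*} [NormedAddCommGroup E] [InnerProductSpace ℝ E] [CompleteSpace E]

theorem HasGradientAt.hasDerivAt_comp_add_smul {f : E → ℝ} {a v d : E} {t : ℝ}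
    (hf : HasGradientAt f d (a + t • v)) :
    HasDerivAt (fun s : ℝ => f (a + s • v)) ⟪d, v⟫ t := by
  have hline : HasDerivAt (fun s : ℝ => a + s • v) v t := by
    simpa using ((hasDerivAt_id t).smul_const v).const_add a
  exact hf.hasFDerivAt.comp_hasDerivAt t hline

theorem ConvexOn.add_inner_le_of_hasGradientAt {f : E → ℝ} {d a : E}
    (hf : ConvexOn ℝ univ f) (hd : HasGradientAt f d a) (y : E) :
    f a + ⟪d, y - a⟫ ≤ f y := by
  have hline : ConvexOn ℝ univ fun s : ℝ => f (a + s • (y - a)) := by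
    simpa [Function.comp_def, AffineMap.lineMap_apply, add_comm] using
      hf.comp_affineMap (AffineMap.lineMap a y)
  have hd0 : HasDerivAt (fun s : ℝ => f (a + s • (y - a))) ⟪d, y - a⟫ 0 :=
    HasGradientAt.hasDerivAt_comp_add_smul (by simpa using hd)
  have := hline.le_slope_of_hasDerivAt (mem_univ 0) (mem_univ 1) one_pos hd0
  simp only [slope_def_field, one_smul, add_sub_cancel, zero_smul, add_zero, sub_zero,
    div_one] at this
  linarith

theorem le_add_inner_add_sq_of_lipschitz_gradient {f : E → ℝ} {f' : E → E} {L : ℝ}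
    (hgrad : ∀ x, HasGradientAt f (f' x) x) (hLip : ∀ x y, ‖f' x - f' y‖ ≤ L * ‖x - y‖)
    (a y : E) : f y ≤ f a + ⟪f' a, y - a⟫ + L / 2 * ‖y - a‖ ^ 2 := by
  set v := y - a
  set ψ : ℝ → ℝ := fun t => f (a + t • v) - t * ⟪f' a, v⟫ - L / 2 * t ^ 2 * ‖v‖ ^ 2
  have hψ : ∀ t, HasDerivAt ψ (⟪f' (a + t • v) - f' a, v⟫ - L * t * ‖v‖ ^ 2) t := by
    intro t
    refine ((((hgrad _).hasDerivAt_comp_add_smul).sub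
      ((hasDerivAt_id t).mul_const ⟪f' a, v⟫)).sub
      (((hasDerivAt_pow 2 t).const_mul (L / 2)).mul_const (‖v‖ ^ 2))).congr_deriv ?_
    rw [inner_sub_left]
    simp only [Nat.cast_ofNat]
    ring
  have hψ_nonpos : ∀ t > 0, ⟪f' (a + t • v) - f' a, v⟫ - L * t * ‖v‖ ^ 2 ≤ 0 := by
    intro t ht
    have := hLip (a + t • v) a
    rw [add_sub_cancel_left, norm_smul, Real.norm_of_nonneg ht.le] at this
    nlinarith [real_inner_le_norm (f' (a + t • v) - f' a) v, norm_nonneg v]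
  have hanti : AntitoneOn ψ (Ici 0) := by
    refine antitoneOn_of_hasDerivWithinAt_nonpos (convex_Ici 0)
      (fun t _ => (hψ t).continuousAt.continuousWithinAt) (fun t _ => (hψ t).hasDerivWithinAt) ?_
    rw [interior_Ici]
    exact hψ_nonpos
  have h10 : ψ 1 ≤ ψ 0 := hanti self_mem_Ici (by norm_num) zero_le_one
  simp only [ψ, v, one_smul, add_sub_cancel, zero_smul, add_zero, one_pow, one_mul, mul_one,
    zero_mul, sub_zero, ne_eq, OfNat.ofNat_ne_zero, not_false_eq_true, zero_pow, mul_zero] at h10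
  linarith

end Smooth

section ProxGrad

variable {E : Type*} [NormedAddCommGroup E] [InnerProductSpace ℝ E]

theorem StrongConvexOn.add_sq_le_of_isMinOn {s : Set E} {m : ℝ} {h : E → ℝ} {q u : E}
    (hh : StrongConvexOn s m h) (hq : q ∈ s) (hmin : IsMinOn h s q) (hu : u ∈ s) :
    h q + m / 2 * ‖u - q‖ ^ 2 ≤ h u := by
  have hstep : ∀ σ ∈ Ioo (0 : ℝ) 1, h q + (1 - σ) * (m / 2 * ‖u - q‖ ^ 2) ≤ h u := by
    rintro σ ⟨hσ0, hσ1⟩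
    have hw := hh.2 hq hu (sub_nonneg.2 hσ1.le) hσ0.le (sub_add_cancel 1 σ)
    have hqw : h q ≤ h ((1 - σ) • q + σ • u) :=
      hmin (hh.1 hq hu (sub_nonneg.2 hσ1.le) hσ0.le (sub_add_cancel 1 σ))
    rw [smul_eq_mul, smul_eq_mul, norm_sub_rev] at hw
    refine le_of_mul_le_mul_left ?_ hσ0
    linear_combination hqw + hw
  have hcont : Continuous fun σ : ℝ => h q + (1 - σ) * (m / 2 * ‖u - q‖ ^ 2) := by fun_prop
  have hlim := (hcont.tendsto' 0 (h q + m / 2 * ‖u - q‖ ^ 2) (by simp)).mono_left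
    (nhdsWithin_le_nhds (s := Ioi 0))
  exact le_of_tendsto hlim (by filter_upwards [Ioo_mem_nhdsGT one_pos] using hstep)

noncomputable def proxModel (f : E → ℝ) (f' : E → E) (γ : ℝ) (g : E → ℝ) (a u : E) : ℝ :=
  f a + ⟪f' a, u - a⟫ + γ / 2 * ‖u - a‖ ^ 2 + g u

theorem strongConvexOn_proxModel {s : Set E} {f : E → ℝ} {f' : E → E} {g : E → ℝ} (γ : ℝ)
    (a : E) (hg : ConvexOn ℝ s g) : StrongConvexOn s γ (proxModel f f' γ g a) := by
  rw [strongConvexOn_iff_convex]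
  have hsplit : (fun u => proxModel f f' γ g a u - γ / 2 * ‖u‖ ^ 2) =
      fun u => g u + (innerₛₗ ℝ (f' a - γ • a) u + (f a - ⟪f' a, a⟫ + γ / 2 * ‖a‖ ^ 2)) := by
    funext u
    simp only [proxModel, norm_sub_sq_real, inner_sub_left, inner_sub_right, real_inner_smul_left,
      innerₛₗ_apply_apply, real_inner_comm u a]
    ring
  rw [hsplit]
  exact hg.add (((innerₛₗ ℝ (f' a - γ • a)).convexOn hg.1).add_const _)

theorem add_sq_le_of_isMinOn_proxModel [CompleteSpace E] {s : Set E} {f : E → ℝ} {f' : E → E}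
    {g : E → ℝ} {L γ : ℝ} (hf : ConvexOn ℝ univ f) (hgrad : ∀ x, HasGradientAt f (f' x) x)
    (hLip : ∀ x y, ‖f' x - f' y‖ ≤ L * ‖x - y‖) (hγ : L ≤ γ) (hg : ConvexOn ℝ s g) {a q u : E}
    (hq : q ∈ s) (hmin : IsMinOn (proxModel f f' γ g a) s q) (hu : u ∈ s) :
    f q + g q + γ / 2 * ‖u - q‖ ^ 2 ≤ f u + g u + γ / 2 * ‖u - a‖ ^ 2 := by
  have hdesc := le_add_inner_add_sq_of_lipschitz_gradient hgrad hLip a q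
  have hlin := hf.add_inner_le_of_hasGradientAt (hgrad a) u
  have hmodel := (strongConvexOn_proxModel γ a hg).add_sq_le_of_isMinOn hq hmin hu
  have hLγ : L / 2 * ‖q - a‖ ^ 2 ≤ γ / 2 * ‖q - a‖ ^ 2 := by gcongr
  simp only [proxModel] at hmodel
  linarith

theorem sub_le_of_three_point {s X : Set E} {φ : E → ℝ} {φstar γ t : ℝ} {a q : E}
    (hφ : ConvexOn ℝ s φ) (hγ : 0 ≤ γ) (ha : a ∈ s) (hX : ∀ x ∈ X, x ∈ s ∧ φ x = φstar)
    (hXne : X.Nonempty)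
    (h3 : ∀ u ∈ s, φ q + γ / 2 * ‖u - q‖ ^ 2 ≤ φ u + γ / 2 * ‖u - a‖ ^ 2)
    (ht0 : 0 ≤ t) (ht1 : t ≤ 1) :
    φ q - φstar ≤
      (1 - t) * (φ a - φstar) + γ * t * infDist a X * ‖a - q‖ - γ / 2 * ‖a - q‖ ^ 2 := by
  set r := ‖a - q‖
  suffices h : ∀ y ∈ X,
      φ q - φstar ≤ γ * t * r * dist a y + ((1 - t) * (φ a - φstar) - γ / 2 * r ^ 2) by
    linarith [le_mul_infDist_add hXne (by positivity : 0 ≤ γ * t * r) h]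
  intro y hy
  obtain ⟨hys, hφy⟩ := hX y hy
  set u := (1 - t) • a + t • y
  have hφu : φ u ≤ (1 - t) * φ a + t * φstar := by
    simpa [hφy] using hφ.2 ha hys (sub_nonneg.2 ht1) ht0 (sub_add_cancel 1 t)
  have hua : ‖u - a‖ = t * dist a y := by
    rw [show u - a = t • (y - a) by simp only [u]; module, norm_smul, Real.norm_of_nonneg ht0,
      dist_comm, dist_eq_norm]
  have huq : (r - t * dist a y) ^ 2 ≤ ‖u - q‖ ^ 2 := by
    have := abs_norm_sub_norm_le (a - q) (a - u)
    rw [norm_sub_rev a u, hua, show a - q - (a - u) = u - q by abel] at this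
    simpa using pow_le_pow_left₀ (abs_nonneg _) this 2
  have := h3 u (hφ.1 ha hys (sub_nonneg.2 ht1) ht0 (sub_add_cancel 1 t))
  rw [hua] at this
  nlinarith

theorem proxGrad_contraction_of_errorBound [CompleteSpace E] {s X : Set E} {f : E → ℝ}
    {f' : E → E} {g : E → ℝ} {L γ κ φstar : ℝ} (hγ0 : 0 < γ) (hγ : L ≤ γ) (hκ : 0 < κ)
    (hf : ConvexOn ℝ univ f) (hgrad : ∀ x, HasGradientAt f (f' x) x)
    (hLip : ∀ x y, ‖f' x - f' y‖ ≤ L * ‖x - y‖) (hg : ConvexOn ℝ s g) {a q : E} (ha : a ∈ s)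
    (hq : q ∈ s) (hmin : IsMinOn (proxModel f f' γ g a) s q)
    (hX : ∀ x ∈ X, x ∈ s ∧ f x + g x = φstar) (hXne : X.Nonempty)
    (hopt : ∀ u ∈ s, φstar ≤ f u + g u) (heb : κ * infDist a X ≤ γ * ‖a - q‖) :
    f q + g q - φstar ≤ (1 - κ / (2 * γ)) * (f a + g a - φstar) := by
  have hφ : ConvexOn ℝ s fun u => f u + g u := (hf.subset (subset_univ s) hg.1).add hg
  refine le_one_sub_mul_of_forall_le hγ0 hκ (norm_nonneg _) (sub_nonneg.2 (hopt q hq)) heb ?_ ?_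
  · intro hr
    rw [norm_eq_zero, sub_eq_zero] at hr
    rw [hr]
  · intro t ht0 ht1
    refine sub_le_of_three_point hφ hγ0.le ha hX hXne (fun u hu => ?_) ht0 ht1
    linarith [add_sq_le_of_isMinOn_proxModel hf hgrad hLip hγ hg hq hmin hu]

end ProxGrad

def effDom {E : Type*} (g : E → EReal) : Set E := {x | g x ≠ ⊤}

theorem mem_effDom_of_coe_add_le {E : Type*} {g : E → EReal} {x : E} {r c : ℝ}
    (h : (r : EReal) + g x ≤ c) : x ∈ effDom g :=
  (EReal.add_ne_top_iff_ne_top_right (EReal.coe_ne_bot r) (EReal.coe_ne_top r)).1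
    (ne_top_of_le_ne_top (EReal.coe_ne_top c) h)

theorem coe_add_eq_coe_add_toReal {E : Type*} {g : E → EReal} (hbot : ∀ x, g x ≠ ⊥) {x : E}
    (hx : x ∈ effDom g) (r : ℝ) : (r : EReal) + g x = ((r + (g x).toReal : ℝ) : EReal) := by
  rw [EReal.coe_add, EReal.coe_toReal hx (hbot x)]

theorem convexOn_effDom_toReal {E : Type*} [AddCommGroup E] [Module ℝ E] {g : E → EReal}
    (hbot : ∀ x, g x ≠ ⊥)
    (hconv : ∀ x y : E, ∀ a b : ℝ, 0 ≤ a → 0 ≤ b → a + b = 1 →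
      g (a • x + b • y) ≤ (a : EReal) * g x + (b : EReal) * g y) :
    ConvexOn ℝ (effDom g) fun x => (g x).toReal := by
  have key : ∀ x ∈ effDom g, ∀ y ∈ effDom g, ∀ a b : ℝ, 0 ≤ a → 0 ≤ b → a + b = 1 →
      g (a • x + b • y) ≤ ((a * (g x).toReal + b * (g y).toReal : ℝ) : EReal) := by
    intro x hx y hy a b ha hb hab
    have := hconv x y a b ha hb hab
    rwa [← EReal.coe_toReal hx (hbot x), ← EReal.coe_toReal hy (hbot y), ← EReal.coe_mul,
      ← EReal.coe_mul, ← EReal.coe_add] at this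
  refine ⟨fun x hx y hy a b ha hb hab => ne_top_of_le_ne_top (EReal.coe_ne_top _)
    (key x hx y hy a b ha hb hab), fun x hx y hy a b ha hb hab => ?_⟩
  simpa only [smul_eq_mul, EReal.toReal_coe] using
    EReal.toReal_le_toReal (key x hx y hy a b ha hb hab) (hbot _) (EReal.coe_ne_top _)

theorem stmt_7_general {n : ℕ} (L γ : ℝ) (hL : 0 < L) (hγ : γ ≥ L)
    (f : Euc n → ℝ) (f' : Euc n → Euc n) (g : Euc n → EReal)
    (hconv : ConvexOn ℝ Set.univ f)
    (hgrad : ∀ x, HasGradientAt f (f' x) x)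
    (hLip : ∀ x y, ‖f' x - f' y‖ ≤ L * ‖x - y‖)
    (hgbot : ∀ x, g x ≠ ⊥)
    (hgconv : ∀ x y : Euc n, ∀ a b : ℝ, 0 ≤ a → 0 ≤ b → a + b = 1 →
      g (a • x + b • y) ≤ (a : EReal) * g x + (b : EReal) * g y)
    (p : Euc n → Euc n)
    (hp : ∀ xb x, ((f xb + ⟪f' xb, p xb - xb⟫ + γ / 2 * ‖p xb - xb‖ ^ 2 : ℝ) : EReal) + g (p xb)
        ≤ ((f xb + ⟪f' xb, x - xb⟫ + γ / 2 * ‖x - xb‖ ^ 2 : ℝ) : EReal) + g x)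
    (X : Set (Euc n))
    (hX : X = {x | ∀ y, (f x : EReal) + g x ≤ (f y : EReal) + g y})
    (xs : Euc n) (hxs : xs ∈ X)
    (fstar : ℝ) (hstar : (f xs : EReal) + g xs = (fstar : ℝ))
    (κ ω : ℝ) (hκ : 0 < κ)
    (heGEB : ∀ y, (f y : EReal) + g y ≤ ((fstar + ω : ℝ) : EReal) →
      ‖γ • (y - p y)‖ ≥ κ * Metric.infDist y X)
    (x : ℕ → Euc n)
    (hiter : ∀ k, x (k + 1) = x k - (1 / γ) • (γ • (x k - p (x k)))) :
    ∀ i, (f (x i) : EReal) + g (x i) ≤ ((fstar + ω : ℝ) : EReal) →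
      (f (x (i + 1)) : EReal) + g (x (i + 1)) ≤
        ((fstar + (1 - κ / (2 * γ)) * (((f (x i) : EReal) + g (x i)).toReal - fstar) : ℝ) : EReal) := by
  intro i hsub
  set a := x i
  have hγ0 : 0 < γ := hL.trans_le hγ
  have hφ : ∀ {u}, u ∈ effDom g → ∀ r : ℝ,
      (r : EReal) + g u = ((r + (g u).toReal : ℝ) : EReal) :=
    coe_add_eq_coe_add_toReal hgbot
  have ha : a ∈ effDom g := mem_effDom_of_coe_add_le hsub
  have hq : p a ∈ effDom g := mem_effDom_of_coe_add_le ((hp a a).trans_eq (hφ ha _))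
  have hmin : IsMinOn (proxModel f f' γ (fun x => (g x).toReal) a) (effDom g) (p a) :=
    isMinOn_iff.2 fun u hu => by
      have := hp a u
      rwa [hφ hq, hφ hu, EReal.coe_le_coe_iff] at this
  have hopt : ∀ u ∈ effDom g, fstar ≤ f u + (g u).toReal := fun u hu => by
    have := (hX ▸ hxs :) u
    rwa [hstar, hφ hu, EReal.coe_le_coe_iff] at this
  have hXs : ∀ y ∈ X, y ∈ effDom g ∧ f y + (g y).toReal = fstar := by
    intro y hy
    have hle : (f y : EReal) + g y ≤ fstar := hstar ▸ (hX ▸ hy :) xs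
    have hy' := mem_effDom_of_coe_add_le hle
    rw [hφ hy', EReal.coe_le_coe_iff] at hle
    exact ⟨hy', le_antisymm hle (hopt y hy')⟩
  have heb : κ * infDist a X ≤ γ * ‖a - p a‖ := by
    simpa [norm_smul, abs_of_pos hγ0] using heGEB a hsub
  have key := proxGrad_contraction_of_errorBound hγ0 hγ hκ hconv hgrad hLip
    (convexOn_effDom_toReal hgbot hgconv) ha hq hmin hXs ⟨xs, hxs⟩ hopt heb
  have hx1 : x (i + 1) = p a := by
    rw [hiter, smul_smul, one_div, inv_mul_cancel₀ hγ0.ne', one_smul, sub_sub_cancel]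
  rw [hx1, hφ hq, hφ ha, EReal.toReal_coe, EReal.coe_le_coe_iff]
  linarith

theorem stmt_7 {n : ℕ} (L γ : ℝ) (hL : 0 < L) (hγ : γ ≥ L)
    (f : Euc n → ℝ) (f' : Euc n → Euc n) (g : Euc n → EReal)
    (hconv : ConvexOn ℝ Set.univ f)
    (hgrad : ∀ x, HasGradientAt f (f' x) x)
    (hLip : ∀ x y, ‖f' x - f' y‖ ≤ L * ‖x - y‖)
    (hgbot : ∀ x, g x ≠ ⊥) (hgtop : ∃ x, g x ≠ ⊤)
    (hglsc : LowerSemicontinuous g)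
    (hgconv : ∀ x y : Euc n, ∀ a b : ℝ, 0 ≤ a → 0 ≤ b → a + b = 1 →
      g (a • x + b • y) ≤ (a : EReal) * g x + (b : EReal) * g y)
    (p : Euc n → Euc n)
    (hp : ∀ xb x, ((f xb + ⟪f' xb, p xb - xb⟫ + γ / 2 * ‖p xb - xb‖ ^ 2 : ℝ) : EReal) + g (p xb)
        ≤ ((f xb + ⟪f' xb, x - xb⟫ + γ / 2 * ‖x - xb‖ ^ 2 : ℝ) : EReal) + g x)
    (X : Set (Euc n))
    (hX : X = {x | ∀ y, (f x : EReal) + g x ≤ (f y : EReal) + g y})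
    (hne : X.Nonempty)
    (xs : Euc n) (hxs : xs ∈ X)
    (fstar : ℝ) (hstar : (f xs : EReal) + g xs = (fstar : ℝ))
    (κ ω : ℝ) (hκ : 0 < κ) (hω : 0 < ω)
    (heGEB : ∀ y, (f y : EReal) + g y ≤ ((fstar + ω : ℝ) : EReal) →
      ‖γ • (y - p y)‖ ≥ κ * Metric.infDist y X)
    (x : ℕ → Euc n)
    (hiter : ∀ k, x (k + 1) = x k - (1 / γ) • (γ • (x k - p (x k)))) :
    ∀ i, (f (x i) : EReal) + g (x i) ≤ ((fstar + ω : ℝ) : EReal) →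
      (f (x (i + 1)) : EReal) + g (x (i + 1)) ≤
        ((fstar + (1 - κ / (2 * γ)) * (((f (x i) : EReal) + g (x i)).toReal - fstar) : ℝ) : EReal) :=
  stmt_7_general L γ hL hγ f f' g hconv hgrad hLip hgbot hgconv p hp X hX xs hxs fstar hstar κ ω hκ
    heGEB x hiter
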